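/- Let m and h be positive integers, let P : Fin h × Fin m → ℝ satisfy P(i,j) > 0 for all i,j and ∑_{i=1}^{h} P(i,j) = 1 for every j, let G : ℝ^m → ℝ be strictly convex, let G' : ℝ^m → ℝ^m be a subgradient selection for G, and let φ : ℝ^m → ℝ^{h×m} satisfy ∑_{i=1}^{h} φ(r)_{i,j} = G'(r)_j for every r and j. Define Ψ(r, i, j) = G(r) - ⟨G'(r), r⟩ + φ(r)_{i,j} / P(i,j). Then Ψ is strictly proper: for all probability vectors b, r ∈ Δ_m with r ≠ b, EU(b, b) > EU(b, r), where EU(b, r) = ∑_{i=1}^{h} ∑_{j=1}^{m} P(i,j) · b_j · Ψ(r, i, j). -/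

import Mathlib

/-!
Because the column sums of `P` are one and the `φ`-terms sum to `G'(r)`, the expected
utility of the report `r` under the belief `b` collapses to `G r + ⟨G' r, b - r⟩`, the value
at `b` of the supporting hyperplane of `G` at `r`. Truthful reporting earns `G b`, and the
strict subgradient inequality puts every supporting hyperplane at `r ≠ b` strictly below `G b`.
-/

open Finset

variable {ι α : Type*} [Fintype ι] [Fintype α]

theorem sum_sum_mul_add_div_eq {P : ι × α → ℝ} (hP : ∀ i j, P (i, j) ≠ 0)
    (hPsum : ∀ j, ∑ i, P (i, j) = 1) (b : α → ℝ) (c : ℝ) (φ : ι → α → ℝ) :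
    ∑ i, ∑ j, P (i, j) * b j * (c + φ i j / P (i, j)) =
      c * ∑ j, b j + ∑ j, b j * ∑ i, φ i j := by
  have hterm : ∀ i j, P (i, j) * b j * (c + φ i j / P (i, j)) =
      P (i, j) * (c * b j) + b j * φ i j := by
    intro i j
    field_simp [hP i j]
  simp only [hterm, sum_add_distrib, mul_sum]
  rw [sum_comm (f := fun i j => P (i, j) * (c * b j)), sum_comm (f := fun i j => b j * φ i j)]
  simp only [← sum_mul, hPsum, one_mul]

theorem expected_payment_eq_supportingHyperplane {P : ι × α → ℝ}
    (hP : ∀ i j, P (i, j) ≠ 0) (hPsum : ∀ j, ∑ i, P (i, j) = 1)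
    {b : α → ℝ} (hb_sum : ∑ j, b j = 1) (G : (α → ℝ) → ℝ) (G' : (α → ℝ) → α → ℝ)
    {x : α → ℝ} {φ : ι → α → ℝ} (hφ : ∀ j, ∑ i, φ i j = G' x j) :
    ∑ i, ∑ j, P (i, j) * b j * (G x - ∑ k, G' x k * x k + φ i j / P (i, j)) =
      G x + ∑ j, G' x j * (b j - x j) := by
  rw [sum_sum_mul_add_div_eq hP hPsum, hb_sum]
  simp only [hφ, mul_sub, sum_sub_distrib]
  simp only [mul_comm (b _)]
  ring

theorem payment_function_strictly_proper_general
    (m h : ℕ)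
    (P : Fin h × Fin m → ℝ)
    (hPpos : ∀ i j, 0 < P (i, j))
    (hPsum : ∀ j : Fin m, ∑ i : Fin h, P (i, j) = 1)
    (G : (Fin m → ℝ) → ℝ)
    (G' : (Fin m → ℝ) → (Fin m → ℝ))
    (hG'sub : ∀ x y : Fin m → ℝ, y ≠ x →
      G x + ∑ j, G' x j * (y j - x j) < G y)
    (φ : (Fin m → ℝ) → Fin h → Fin m → ℝ)
    (hφ : ∀ (r : Fin m → ℝ) (j : Fin m), ∑ i : Fin h, φ r i j = G' r j)
    (Ψ : (Fin m → ℝ) → Fin h → Fin m → ℝ)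
    (hΨ : ∀ (r : Fin m → ℝ) (i : Fin h) (j : Fin m),
      Ψ r i j = G r - (∑ k, G' r k * r k) + φ r i j / P (i, j))
    (b r : Fin m → ℝ)
    (hb_sum : ∑ j, b j = 1)
    (hne : r ≠ b) :
    ∑ i : Fin h, ∑ j : Fin m, P (i, j) * b j * Ψ r i j <
      ∑ i : Fin h, ∑ j : Fin m, P (i, j) * b j * Ψ b i j := by
  have hP : ∀ i j, P (i, j) ≠ 0 := fun i j => (hPpos i j).ne'
  simp only [hΨ]
  rw [expected_payment_eq_supportingHyperplane hP hPsum hb_sum G G' (hφ r),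
    expected_payment_eq_supportingHyperplane hP hPsum hb_sum G G' (hφ b)]
  simpa using hG'sub r b hne.symm

/-- With `G` strictly convex and `G'` a strict subgradient selection,
the payment function `Ψ(r, i, j) = G(r) - ⟨G'(r), r⟩ + φ(r)_{i,j} / P(i,j)` is
strictly proper: any non-truthful report yields strictly lower expected utility. -/
theorem payment_function_strictly_proper
    (m h : ℕ) (hm : 0 < m) (hh : 0 < h)
    (P : Fin h × Fin m → ℝ)
    (hPpos : ∀ i j, 0 < P (i, j))
    (hPsum : ∀ j : Fin m, ∑ i : Fin h, P (i, j) = 1)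
    (G : (Fin m → ℝ) → ℝ)
    (hGconv : StrictConvexOn ℝ Set.univ G)
    (G' : (Fin m → ℝ) → (Fin m → ℝ))
    (hG'sub : ∀ x y : Fin m → ℝ, y ≠ x →
      G x + ∑ j, G' x j * (y j - x j) < G y)
    (φ : (Fin m → ℝ) → Fin h → Fin m → ℝ)
    (hφ : ∀ (r : Fin m → ℝ) (j : Fin m), ∑ i : Fin h, φ r i j = G' r j)
    (Ψ : (Fin m → ℝ) → Fin h → Fin m → ℝ)
    (hΨ : ∀ (r : Fin m → ℝ) (i : Fin h) (j : Fin m),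
      Ψ r i j = G r - (∑ k, G' r k * r k) + φ r i j / P (i, j))
    (b r : Fin m → ℝ)
    (hb_nonneg : ∀ j, 0 ≤ b j) (hb_sum : ∑ j, b j = 1)
    (hr_nonneg : ∀ j, 0 ≤ r j) (hr_sum : ∑ j, r j = 1)
    (hne : r ≠ b) :
    ∑ i : Fin h, ∑ j : Fin m, P (i, j) * b j * Ψ r i j <
      ∑ i : Fin h, ∑ j : Fin m, P (i, j) * b j * Ψ b i j :=
  payment_function_strictly_proper_general m h P hPpos hPsum G G' hG'sub φ hφ Ψ hΨ b r hb_sum hne
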